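/- arXiv:0707.3272 — 2 statements merged into one kernel-verified Lean document; each statement's English description precedes it below -/
import Mathlib

section
/- Let {A_j} be a Parseval operator-valued frame with analysis operator θ_A and frame projection P_A, and let V ∈ B(ℓ²(J)⊗H_o) be a partial isometry with V*V = P_A. Then {B_j := L_j* V θ_A}_{j∈J} is a Parseval operator-valued frame, θ_B = Vθ_A, and V = θ_B θ_A*. Conversely, every Parseval operator-valued frame {B_j} on H with range H_o arises this way with V := θ_Bθ_A*. -/
open ContinuousLinearMap

/-! A partial isometry `V` with `V*V = P_A` satisfies `V P_A = V`, so `V θ_A` is again an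
isometry and `V = (V θ_A) θ_A*`; applying the isometry `(V θ_A)*` to the resolution of the
identity `Σ L_j L_j* = 1` gives the Parseval identity for `B_j = L_j* V θ_A`. Conversely, the
`L_j` have mutually orthogonal ranges and are isometries, so `L_j*` extracts the `j`-th term
from `θ_B x = Σ L_i B_i x`, i.e. `B_j = L_j* θ_B = L_j* (θ_B θ_A*) θ_A`. -/

section

variable {𝕜 E F G : Type*} [RCLike 𝕜]
  [NormedAddCommGroup E] [InnerProductSpace 𝕜 E] [CompleteSpace E]
  [NormedAddCommGroup F] [InnerProductSpace 𝕜 F] [CompleteSpace F]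
  [NormedAddCommGroup G] [InnerProductSpace 𝕜 G] [CompleteSpace G]

lemma comp_eq_self_of_adjoint_comp_self_eq_idempotent {V : E →L[𝕜] F} {P : E →L[𝕜] E}
    (hV : adjoint V ∘L V = P) (hP : P ∘L P = P) : V ∘L P = V := by
  ext x
  have hker : ‖V (x - P x)‖ ^ 2 = 0 := by
    rw [apply_norm_sq_eq_inner_adjoint_left, hV, map_sub, ← comp_apply P P, hP, sub_self,
      inner_zero_left, map_zero]
  exact (sub_eq_zero.mp (by simpa using hker)).symm

lemma comp_adjoint_idempotent_of_adjoint_comp_self {T : E →L[𝕜] F}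
    (hT : adjoint T ∘L T = 1) : (T ∘L adjoint T) ∘L (T ∘L adjoint T) = T ∘L adjoint T := by
  rw [comp_assoc, ← comp_assoc (adjoint T), hT, one_def, id_comp]

lemma hasSum_adjoint_comp_apply_of_isometry {J : Type*} {L : J → (F →L[𝕜] G)}
    (hLsum : ∀ y, HasSum (fun j => L j (adjoint (L j) y)) y) {T : E →L[𝕜] G}
    (hT : adjoint T ∘L T = 1) (x : E) :
    HasSum (fun j => adjoint (adjoint (L j) ∘L T) ((adjoint (L j) ∘L T) x)) x := by
  simpa [adjoint_comp, adjoint_adjoint, ← comp_apply (adjoint T) T, hT]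
    using (adjoint T).hasSum (hLsum (T x))

lemma adjoint_apply_eq_of_hasSum {J : Type*} {L : J → (F →L[𝕜] G)}
    (hL1 : ∀ j, adjoint (L j) ∘L L j = 1) (hL0 : ∀ i j, i ≠ j → adjoint (L i) ∘L L j = 0)
    {y : J → F} {z : G} (hz : HasSum (fun i => L i (y i)) z) (j : J) :
    adjoint (L j) z = y j := by
  have hsingle : HasSum (fun i => adjoint (L j) (L i (y i))) (adjoint (L j) (L j (y j))) :=
    hasSum_single j fun i hi => by simpa using congr($(hL0 j i hi.symm) (y i))
  rw [((adjoint (L j)).hasSum hz).unique hsingle, ← comp_apply, hL1]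
  rfl

end

theorem stmt5_general
    {H H₀ K : Type*}
    [NormedAddCommGroup H] [InnerProductSpace ℂ H] [CompleteSpace H]
    [NormedAddCommGroup H₀] [InnerProductSpace ℂ H₀] [CompleteSpace H₀]
    [NormedAddCommGroup K] [InnerProductSpace ℂ K] [CompleteSpace K]
    {J : Type*}
    (L : J → (H₀ →L[ℂ] K))
    (hL1 : ∀ j, (adjoint (L j)) ∘L (L j) = (1 : H₀ →L[ℂ] H₀))
    (hL0 : ∀ i j, i ≠ j → (adjoint (L i)) ∘L (L j) = 0)
    (hLsum : ∀ x : K, HasSum (fun j => L j ((adjoint (L j)) x)) x)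
    (θA : H →L[ℂ] K)
    (hPars : adjoint θA ∘L θA = 1) :
    (∀ V : K →L[ℂ] K, adjoint V ∘L V = θA ∘L adjoint θA →
      ((∀ x, HasSum (fun j => L j ((adjoint (L j) ∘L (V ∘L θA)) x)) ((V ∘L θA) x)) ∧
       (∀ x, HasSum
          (fun j => adjoint (adjoint (L j) ∘L (V ∘L θA))
            ((adjoint (L j) ∘L (V ∘L θA)) x)) x) ∧
       V = (V ∘L θA) ∘L adjoint θA)) ∧
    (∀ (B : J → (H →L[ℂ] H₀)) (θB : H →L[ℂ] K),
      (∀ x, HasSum (fun j => L j (B j x)) (θB x)) →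
      adjoint θB ∘L θB = 1 →
      (adjoint (θB ∘L adjoint θA) ∘L (θB ∘L adjoint θA) = θA ∘L adjoint θA ∧
       ∀ j, B j = adjoint (L j) ∘L ((θB ∘L adjoint θA) ∘L θA))) := by
  refine ⟨fun V hV => ?_, fun B θB hB hθB => ?_⟩
  · have hVP : V ∘L (θA ∘L adjoint θA) = V :=
      comp_eq_self_of_adjoint_comp_self_eq_idempotent hV
        (comp_adjoint_idempotent_of_adjoint_comp_self hPars)
    have hVθA : adjoint (V ∘L θA) ∘L (V ∘L θA) = 1 := by
      rw [adjoint_comp, comp_assoc, ← comp_assoc (adjoint V), hV, comp_assoc θA, ← comp_assoc, hPars,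
        one_def, id_comp]
    refine ⟨fun x => by simpa using hLsum (V (θA x)),
      hasSum_adjoint_comp_apply_of_isometry hLsum hVθA, ?_⟩
    rw [comp_assoc, hVP]
  · refine ⟨?_, fun j => ?_⟩
    · rw [adjoint_comp, adjoint_adjoint, comp_assoc, ← comp_assoc (adjoint θB), hθB, one_def, id_comp]
    · ext x
      simp [← comp_apply (adjoint θA) θA, hPars, adjoint_apply_eq_of_hasSum hL1 hL0 (hB x)]

/-- Let `{A_j}` be a Parseval operator-valued frame with analysis operator
`θ_A` and frame projection `P_A = θ_A θ_A*`.
(1) For every partial isometry `V` with `V*V = P_A`, the family `B_j := L_j* V θ_A` is a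
Parseval operator-valued frame with analysis operator `V θ_A`, and `V = (Vθ_A) θ_A*`.
(2) Conversely, every Parseval operator-valued frame `{B_j}` on `H` with range `H₀`
arises this way with `V := θ_B θ_A*`. -/
theorem stmt5
    {H H₀ K : Type*}
    [NormedAddCommGroup H] [InnerProductSpace ℂ H] [CompleteSpace H]
    [NormedAddCommGroup H₀] [InnerProductSpace ℂ H₀] [CompleteSpace H₀]
    [NormedAddCommGroup K] [InnerProductSpace ℂ K] [CompleteSpace K]
    {J : Type*}
    (L : J → (H₀ →L[ℂ] K))
    (hL1 : ∀ j, (adjoint (L j)) ∘L (L j) = (1 : H₀ →L[ℂ] H₀))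
    (hL0 : ∀ i j, i ≠ j → (adjoint (L i)) ∘L (L j) = 0)
    (hLsum : ∀ x : K, HasSum (fun j => L j ((adjoint (L j)) x)) x)
    (A : J → (H →L[ℂ] H₀))
    (θA : H →L[ℂ] K)
    (hθA : ∀ x, HasSum (fun j => L j (A j x)) (θA x))
    (hPars : adjoint θA ∘L θA = 1) :
    (∀ V : K →L[ℂ] K, adjoint V ∘L V = θA ∘L adjoint θA →
      ((∀ x, HasSum (fun j => L j ((adjoint (L j) ∘L (V ∘L θA)) x)) ((V ∘L θA) x)) ∧
       (∀ x, HasSum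
          (fun j => adjoint (adjoint (L j) ∘L (V ∘L θA))
            ((adjoint (L j) ∘L (V ∘L θA)) x)) x) ∧
       V = (V ∘L θA) ∘L adjoint θA)) ∧
    (∀ (B : J → (H →L[ℂ] H₀)) (θB : H →L[ℂ] K),
      (∀ x, HasSum (fun j => L j (B j x)) (θB x)) →
      adjoint θB ∘L θB = 1 →
      (adjoint (θB ∘L adjoint θA) ∘L (θB ∘L adjoint θA) = θA ∘L adjoint θA ∧
       ∀ j, B j = adjoint (L j) ∘L ((θB ∘L adjoint θA) ∘L θA))) :=
  stmt5_general L hL1 hL0 hLsum θA hPars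
end

section
/- Two Parseval operator-valued frames {A_j} ⊂ B(H_A,H_o) and {B_j} ⊂ B(H_B,H_o) are strongly disjoint (i.e., {A_j ⊕ B_j} is a Parseval frame on H_A ⊕ H_B) if and only if θ_A*θ_B = 0, if and only if their frame projections are orthogonal: P_A P_B = 0. -/
/-!
Since the `L_j` are isometries with pairwise orthogonal ranges, a family `D_j` with analysis
operator `θ = ∑ L_j D_j` is recovered as `D_j = L_j* θ`; as moreover `∑ L_j L_j* = 1`, its frame
operator `∑ D_j* D_j` is `θ* θ`, so `{D_j}` is Parseval exactly when `θ` is an isometry.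
The analysis operator of `{A_j ⊕ B_j}` is `x ⊕ y ↦ θ_A x + θ_B y`, and for isometries `θ_A`, `θ_B`
this is an isometry exactly when their ranges are orthogonal, i.e. `θ_A* θ_B = 0`. Finally
`P_A P_B = θ_A (θ_A* θ_B) θ_B*` and `θ_A* θ_B = θ_A* (P_A P_B) θ_B`.
-/

open ContinuousLinearMap
open scoped InnerProductSpace

section AnalysisOperator

variable {𝕜 E K H₀ J : Type*} [RCLike 𝕜]
  [NormedAddCommGroup E] [InnerProductSpace 𝕜 E]
  [NormedAddCommGroup H₀] [InnerProductSpace 𝕜 H₀] [CompleteSpace H₀]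
  [NormedAddCommGroup K] [InnerProductSpace 𝕜 K] [CompleteSpace K]
  {L : J → H₀ →L[𝕜] K} {D : J → E →L[𝕜] H₀} {θ : E →L[𝕜] K}

theorem adjoint_comp_eq_of_hasSum
    (hL1 : ∀ j, adjoint (L j) ∘L L j = 1) (hL0 : ∀ i j, i ≠ j → adjoint (L i) ∘L L j = 0)
    (hθ : ∀ x, HasSum (fun j => L j (D j x)) (θ x)) (j : J) :
    adjoint (L j) ∘L θ = D j := by
  classical
  ext x
  have hsingle : (fun i => adjoint (L j) (L i (D i x))) =
      fun i => if i = j then D j x else 0 := by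
    funext i
    rcases eq_or_ne i j with rfl | hij
    · rw [if_pos rfl]; exact DFunLike.congr_fun (hL1 i) _
    · rw [if_neg hij]; exact DFunLike.congr_fun (hL0 j i hij.symm) _
  have hsum := (adjoint (L j)).hasSum (hθ x)
  rw [hsingle] at hsum
  exact hsum.unique (hasSum_ite_eq j _)

theorem hasSum_adjoint_apply_apply [CompleteSpace E]
    (hL1 : ∀ j, adjoint (L j) ∘L L j = 1) (hL0 : ∀ i j, i ≠ j → adjoint (L i) ∘L L j = 0)
    (hLsum : ∀ y, HasSum (fun j => L j (adjoint (L j) y)) y)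
    (hθ : ∀ x, HasSum (fun j => L j (D j x)) (θ x)) (x : E) :
    HasSum (fun j => adjoint (D j) (D j x)) (adjoint θ (θ x)) := by
  have hD : ∀ j, adjoint (D j) (D j x) = adjoint θ (L j (adjoint (L j) (θ x))) := fun j => by
    rw [← adjoint_comp_eq_of_hasSum hL1 hL0 hθ j, adjoint_comp, adjoint_adjoint]; rfl
  simpa only [hD] using (adjoint θ).hasSum (hLsum (θ x))

theorem hasSum_adjoint_apply_apply_self_iff [CompleteSpace E]
    (hL1 : ∀ j, adjoint (L j) ∘L L j = 1) (hL0 : ∀ i j, i ≠ j → adjoint (L i) ∘L L j = 0)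
    (hLsum : ∀ y, HasSum (fun j => L j (adjoint (L j) y)) y)
    (hθ : ∀ x, HasSum (fun j => L j (D j x)) (θ x)) :
    (∀ x, HasSum (fun j => adjoint (D j) (D j x)) x) ↔ adjoint θ ∘L θ = 1 := by
  have hsum := hasSum_adjoint_apply_apply hL1 hL0 hLsum hθ
  refine ⟨fun h => ext fun x => (hsum x).unique (h x), fun h x => ?_⟩
  simpa [← comp_apply, h] using hsum x

end AnalysisOperator

section DirectSum

variable {𝕜 E G K : Type*} [RCLike 𝕜]
  [NormedAddCommGroup E] [InnerProductSpace 𝕜 E]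
  [NormedAddCommGroup G] [InnerProductSpace 𝕜 G]
  [NormedAddCommGroup K] [InnerProductSpace 𝕜 K]

namespace ContinuousLinearMap

noncomputable def coprodL2 (S : E →L[𝕜] K) (T : G →L[𝕜] K) : WithLp 2 (E × G) →L[𝕜] K :=
  S.coprod T ∘L (WithLp.prodContinuousLinearEquiv 2 𝕜 E G : WithLp 2 (E × G) →L[𝕜] E × G)

theorem coprodL2_apply (S : E →L[𝕜] K) (T : G →L[𝕜] K) (z : WithLp 2 (E × G)) :
    S.coprodL2 T z = S z.fst + T z.snd := rfl

theorem hasSum_coprodL2 {H₀ J : Type*} [NormedAddCommGroup H₀] [InnerProductSpace 𝕜 H₀]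
    {L : J → H₀ →L[𝕜] K} {A : J → E →L[𝕜] H₀} {B : J → G →L[𝕜] H₀}
    {θA : E →L[𝕜] K} {θB : G →L[𝕜] K}
    (hθA : ∀ x, HasSum (fun j => L j (A j x)) (θA x))
    (hθB : ∀ y, HasSum (fun j => L j (B j y)) (θB y)) (z : WithLp 2 (E × G)) :
    HasSum (fun j => L j ((A j).coprodL2 (B j) z)) (θA.coprodL2 θB z) := by
  simpa only [coprodL2_apply, map_add] using (hθA z.fst).add (hθB z.snd)

theorem adjoint_comp_eq_zero_iff_inner_eq_zero [CompleteSpace E] [CompleteSpace K]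
    {S : E →L[𝕜] K} {T : G →L[𝕜] K} :
    adjoint S ∘L T = 0 ↔ ∀ x y, ⟪S x, T y⟫_𝕜 = 0 := by
  simp only [ContinuousLinearMap.ext_iff, comp_apply, zero_apply, ← adjoint_inner_right S]
  exact ⟨fun h x y => by rw [h, inner_zero_right],
    fun h y => ext_inner_left 𝕜 fun x => by rw [h, inner_zero_right]⟩

theorem adjoint_coprodL2_comp_self_eq_one_iff [CompleteSpace E] [CompleteSpace G]
    [CompleteSpace K] {S : E →L[𝕜] K} {T : G →L[𝕜] K}
    (hS : adjoint S ∘L S = 1) (hT : adjoint T ∘L T = 1) :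
    adjoint (S.coprodL2 T) ∘L S.coprodL2 T = 1 ↔ adjoint S ∘L T = 0 := by
  have hS' := (inner_map_map_iff_adjoint_comp_self S).mpr hS
  have hT' := (inner_map_map_iff_adjoint_comp_self T).mpr hT
  have hgram : ∀ z w, ⟪S.coprodL2 T z, S.coprodL2 T w⟫_𝕜 =
      ⟪z, w⟫_𝕜 + (⟪S z.fst, T w.snd⟫_𝕜 + ⟪T z.snd, S w.fst⟫_𝕜) := by
    intro z w
    simp only [coprodL2_apply, inner_add_left, inner_add_right, hS', hT',
      WithLp.prod_inner_apply, WithLp.ofLp_fst, WithLp.ofLp_snd]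
    ring
  rw [← inner_map_map_iff_adjoint_comp_self, adjoint_comp_eq_zero_iff_inner_eq_zero]
  simp only [hgram, add_eq_left]
  refine ⟨fun h x y => by simpa using h (WithLp.toLp 2 (x, 0)) (WithLp.toLp 2 (0, y)),
    fun h z w => ?_⟩
  rw [h, ← inner_conj_symm, h, map_zero, add_zero]

end ContinuousLinearMap

end DirectSum

theorem adjoint_comp_eq_zero_iff_comp_adjoint_comp_eq_zero {𝕜 E G K : Type*} [RCLike 𝕜]
    [NormedAddCommGroup E] [InnerProductSpace 𝕜 E] [CompleteSpace E]
    [NormedAddCommGroup G] [InnerProductSpace 𝕜 G] [CompleteSpace G]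
    [NormedAddCommGroup K] [InnerProductSpace 𝕜 K] [CompleteSpace K]
    {S : E →L[𝕜] K} {T : G →L[𝕜] K} (hS : adjoint S ∘L S = 1) (hT : adjoint T ∘L T = 1) :
    adjoint S ∘L T = 0 ↔ (S ∘L adjoint S) ∘L (T ∘L adjoint T) = 0 := by
  constructor
  · intro h
    calc (S ∘L adjoint S) ∘L (T ∘L adjoint T) = S ∘L (adjoint S ∘L T) ∘L adjoint T := by
          simp only [comp_assoc]
      _ = 0 := by rw [h, zero_comp, comp_zero]
  · intro h
    calc adjoint S ∘L T = (adjoint S ∘L S) ∘L (adjoint S ∘L T) ∘L (adjoint T ∘L T) := by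
          rw [hS, hT, one_def, one_def, id_comp, comp_id]
      _ = adjoint S ∘L ((S ∘L adjoint S) ∘L (T ∘L adjoint T)) ∘L T := by
          simp only [comp_assoc]
      _ = 0 := by rw [h, zero_comp, comp_zero]

/-- Two Parseval operator-valued frames `{A_j} ⊂ B(H_A,H₀)` and
`{B_j} ⊂ B(H_B,H₀)` are strongly disjoint (i.e. `{A_j ⊕ B_j}`, acting on the Hilbert
direct sum `H_A ⊕₂ H_B` by `(x,y) ↦ A_j x + B_j y`, is a Parseval frame) if and only
if `θ_A* θ_B = 0`, if and only if their frame projections are orthogonal: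
`P_A P_B = 0`. -/
theorem stmt16
    {HA HB H₀ K : Type*}
    [NormedAddCommGroup HA] [InnerProductSpace ℂ HA] [CompleteSpace HA]
    [NormedAddCommGroup HB] [InnerProductSpace ℂ HB] [CompleteSpace HB]
    [NormedAddCommGroup H₀] [InnerProductSpace ℂ H₀] [CompleteSpace H₀]
    [NormedAddCommGroup K] [InnerProductSpace ℂ K] [CompleteSpace K]
    {J : Type*}
    (L : J → (H₀ →L[ℂ] K))
    (hL1 : ∀ j, (adjoint (L j)) ∘L (L j) = (1 : H₀ →L[ℂ] H₀))
    (hL0 : ∀ i j, i ≠ j → (adjoint (L i)) ∘L (L j) = 0)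
    (hLsum : ∀ x : K, HasSum (fun j => L j ((adjoint (L j)) x)) x)
    (A : J → (HA →L[ℂ] H₀)) (B : J → (HB →L[ℂ] H₀))
    (θA : HA →L[ℂ] K) (θB : HB →L[ℂ] K)
    (hθA : ∀ x, HasSum (fun j => L j (A j x)) (θA x))
    (hθB : ∀ y, HasSum (fun j => L j (B j y)) (θB y))
    (hAPars : adjoint θA ∘L θA = 1)
    (hBPars : adjoint θB ∘L θB = 1)
    -- the direct-sum frame `C_j(x ⊕ y) = A_j x + B_j y` on the Hilbert space
    -- `H_A ⊕₂ H_B = WithLp 2 (HA × HB)`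
    (C : J → (WithLp 2 (HA × HB) →L[ℂ] H₀))
    (hC : ∀ j, C j = ((A j).coprod (B j)) ∘L
      ((WithLp.prodContinuousLinearEquiv 2 ℂ HA HB :
        WithLp 2 (HA × HB) ≃L[ℂ] HA × HB) : WithLp 2 (HA × HB) →L[ℂ] HA × HB)) :
    ((∀ z, HasSum (fun j => adjoint (C j) (C j z)) z) ↔
        adjoint θA ∘L θB = 0) ∧
    ((adjoint θA ∘L θB = 0) ↔
        (θA ∘L adjoint θA) ∘L (θB ∘L adjoint θB) = 0) := by
  obtain rfl : C = fun j => (A j).coprodL2 (B j) := funext hC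
  refine ⟨?_, adjoint_comp_eq_zero_iff_comp_adjoint_comp_eq_zero hAPars hBPars⟩
  have hθC := hasSum_coprodL2 hθA hθB
  rw [hasSum_adjoint_apply_apply_self_iff hL1 hL0 hLsum hθC]
  exact adjoint_coprodL2_comp_self_eq_one_iff hAPars hBPars
end
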